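/- arXiv:1803.11275 — 2 statements merged into one kernel-verified Lean document; each statement's English description precedes it below -/
import Mathlib

section
/- A simple graph G is controllable if and only if its complement Ḡ is controllable. -/
/-!
Writing `e` for the all-ones vector, the complement's adjacency matrix is `J - I - A` with
`J v = (eᵀ v) • e`, so by induction `(J - I - A)^j e = p_j(A) e` for a polynomial `p_j` of degree
at most `j` with leading coefficient `(-1)^j`. Hence `W(Gᶜ) = W(G) T` with `T` upper triangular
with diagonal entries `±1`, and `det W(Gᶜ) = ± det W(G)`.
-/

open Matrix

open scoped Classical in
/-- The 0/1 adjacency matrix of a simple graph, over the integers. -/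
noncomputable def adjMat {V : Type*} [Fintype V] (G : SimpleGraph V) : Matrix V V ℤ :=
  Matrix.of fun u v => if G.Adj u v then (1 : ℤ) else 0

/-- The walk matrix of a simple graph on `Fin n`: its `j`-th column is ``A^j e``
where `e` is the all-ones vector. -/
noncomputable def walkMat {n : ℕ} (G : SimpleGraph (Fin n)) : Matrix (Fin n) (Fin n) ℤ :=
  Matrix.of fun i j => ((adjMat G ^ (j : ℕ)) *ᵥ fun _ => (1 : ℤ)) i

/-- `G ∪ w`: adjoin a new vertex (labelled `0`) adjacent to no vertex of `G`;
the original vertex `i` of `G` becomes `i.succ`. -/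
def unionVertex {n : ℕ} (G : SimpleGraph (Fin n)) : SimpleGraph (Fin (n + 1)) where
  Adj u v := ∃ i j : Fin n, u = i.succ ∧ v = j.succ ∧ G.Adj i j
  symm := by
    constructor
    rintro u v ⟨i, j, hu, hv, h⟩
    exact ⟨j, i, hv, hu, h.symm⟩
  loopless := by
    constructor
    rintro u ⟨i, j, rfl, hv, h⟩
    obtain rfl : i = j := Fin.succ_inj.mp hv
    exact G.irrefl h

/-- `G ∨ w`: adjoin a new vertex (labelled `0`) adjacent to every vertex of `G`;
the original vertex `i` of `G` becomes `i.succ`. -/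
def joinVertex {n : ℕ} (G : SimpleGraph (Fin n)) : SimpleGraph (Fin (n + 1)) where
  Adj u v := (u = 0 ∧ v ≠ 0) ∨ (v = 0 ∧ u ≠ 0) ∨
    ∃ i j : Fin n, u = i.succ ∧ v = j.succ ∧ G.Adj i j
  symm := by
    constructor
    rintro u v (⟨h1, h2⟩ | ⟨h1, h2⟩ | ⟨i, j, hu, hv, h⟩)
    · exact Or.inr (Or.inl ⟨h1, h2⟩)
    · exact Or.inl ⟨h1, h2⟩
    · exact Or.inr (Or.inr ⟨j, i, hv, hu, h.symm⟩)
  loopless := by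
    constructor
    rintro u (⟨h1, h2⟩ | ⟨h1, h2⟩ | ⟨i, j, rfl, hv, h⟩)
    · exact h2 h1
    · exact h2 h1
    · obtain rfl : i = j := Fin.succ_inj.mp hv
      exact G.irrefl h

/-- The sequence `G₀, G₁, G₂, …` where `Gᵢ = G_{i-1} ∪ wᵢ` for odd `i` and
`Gᵢ = G_{i-1} ∨ wᵢ` for even `i ≥ 2`. -/
def seqGraph {n0 : ℕ} (G0 : SimpleGraph (Fin n0)) : (i : ℕ) → SimpleGraph (Fin (n0 + i))
  | 0 => G0
  | (i + 1) => if (i + 1) % 2 = 1 then unionVertex (seqGraph G0 i) else joinVertex (seqGraph G0 i)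

/-- A graph is determined by its generalized spectrum. -/
def IsDGS {n : ℕ} (G : SimpleGraph (Fin n)) : Prop :=
  ∀ H : SimpleGraph (Fin n),
    (adjMat H).charpoly = (adjMat G).charpoly →
    (adjMat Hᶜ).charpoly = (adjMat Gᶜ).charpoly →
    Nonempty (H ≃g G)

open Polynomial

namespace Matrix

variable {R : Type*} [CommRing R] {m : ℕ}

def krylov (A : Matrix (Fin m) (Fin m) R) (e : Fin m → R) : Matrix (Fin m) (Fin m) R :=
  of fun i j => (A ^ (j : ℕ) *ᵥ e) i

/-- `krylovPoly a b s j` is the polynomial `p` with `B ^ j *ᵥ e = aeval A p *ᵥ e` when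
`B = a • 1 + b • A + vecMulVec e u` and `s i = u ⬝ᵥ B ^ i *ᵥ e`. -/
noncomputable def krylovPoly (a b : R) (s : ℕ → R) : ℕ → R[X]
  | 0 => 1
  | j + 1 => (C a + C b * X) * krylovPoly a b s j + C (s j)

lemma natDegree_krylovPoly_le (a b : R) (s : ℕ → R) (j : ℕ) :
    (krylovPoly a b s j).natDegree ≤ j := by
  induction j with
  | zero => simp [krylovPoly]
  | succ j ih =>
    have hlin : (C a + C b * X).natDegree ≤ 1 := by compute_degree
    refine natDegree_add_le_of_degree_le ?_ (by simp)
    exact natDegree_mul_le.trans (by omega)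

lemma coeff_krylovPoly_of_lt (a b : R) (s : ℕ → R) {j k : ℕ} (h : j < k) :
    (krylovPoly a b s j).coeff k = 0 :=
  coeff_eq_zero_of_natDegree_lt ((natDegree_krylovPoly_le a b s j).trans_lt h)

lemma coeff_krylovPoly_self (a b : R) (s : ℕ → R) (j : ℕ) :
    (krylovPoly a b s j).coeff j = b ^ j := by
  induction j with
  | zero => simp [krylovPoly]
  | succ j ih =>
    rw [krylovPoly, coeff_add, add_mul, coeff_add, coeff_C_mul, mul_assoc, coeff_C_mul,
      coeff_X_mul, coeff_C_succ, ih, coeff_krylovPoly_of_lt a b s (Nat.lt_succ_self j), pow_succ]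
    ring

lemma pow_mulVec_eq_aeval_krylovPoly {ι : Type*} [Fintype ι] [DecidableEq ι]
    {A B : Matrix ι ι R} {e u : ι → R} {a b : R} (hB : B = a • 1 + b • A + vecMulVec e u)
    (j : ℕ) : B ^ j *ᵥ e = aeval A (krylovPoly a b (fun i => u ⬝ᵥ B ^ i *ᵥ e) j) *ᵥ e := by
  induction j with
  | zero => simp [krylovPoly]
  | succ j ih =>
    have hB_mulVec : ∀ v, B *ᵥ v = a • v + b • (A *ᵥ v) + (u ⬝ᵥ v) • e := fun v => by
      simp [hB, add_mulVec, smul_mulVec, vecMulVec_mulVec]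
    rw [pow_succ', ← mulVec_mulVec, hB_mulVec, krylovPoly]
    simp only [map_add, map_mul, aeval_C, aeval_X, Algebra.algebraMap_eq_smul_one, add_mul,
      smul_mul, one_mul, add_mulVec, smul_mulVec, ← mulVec_mulVec, one_mulVec, ← ih]

noncomputable def krylovCoeffMatrix (a b : R) (s : ℕ → R) : Matrix (Fin m) (Fin m) R :=
  of fun k j => (krylovPoly a b s j).coeff k

lemma isUpperTriangular_krylovCoeffMatrix (a b : R) (s : ℕ → R) :
    (krylovCoeffMatrix (m := m) a b s).IsUpperTriangular :=
  fun _ _ hjk => coeff_krylovPoly_of_lt a b s hjk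

lemma det_krylovCoeffMatrix (a b : R) (s : ℕ → R) :
    (krylovCoeffMatrix (m := m) a b s).det = ∏ i : Fin m, b ^ (i : ℕ) := by
  rw [det_of_isUpperTriangular (isUpperTriangular_krylovCoeffMatrix a b s)]
  exact Finset.prod_congr rfl fun i _ => coeff_krylovPoly_self a b s i

lemma krylov_eq_krylov_mul {A B : Matrix (Fin m) (Fin m) R} {e u : Fin m → R} {a b : R}
    (hB : B = a • 1 + b • A + vecMulVec e u) :
    krylov B e = krylov A e * krylovCoeffMatrix a b (fun i => u ⬝ᵥ B ^ i *ᵥ e) := by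
  ext i j
  have hdeg := (natDegree_krylovPoly_le a b (fun i => u ⬝ᵥ B ^ i *ᵥ e) j).trans_lt j.isLt
  rw [krylov, of_apply, pow_mulVec_eq_aeval_krylovPoly hB, aeval_eq_sum_range' hdeg,
    sum_mulVec, Finset.sum_apply, ← Fin.sum_univ_eq_sum_range, mul_apply]
  simp [krylov, krylovCoeffMatrix, smul_mulVec, mul_comm]

lemma det_krylov {A B : Matrix (Fin m) (Fin m) R} {e u : Fin m → R} {a b : R}
    (hB : B = a • 1 + b • A + vecMulVec e u) :
    (krylov B e).det = (∏ i : Fin m, b ^ (i : ℕ)) * (krylov A e).det := by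
  rw [krylov_eq_krylov_mul hB, det_mul, det_krylovCoeffMatrix, mul_comm]

end Matrix

lemma walkMat_eq_krylov {n : ℕ} (G : SimpleGraph (Fin n)) : walkMat G = krylov (adjMat G) 1 :=
  rfl

lemma adjMat_compl {V : Type*} [Fintype V] [DecidableEq V] (G : SimpleGraph V) :
    adjMat Gᶜ = (-1 : ℤ) • 1 + (-1 : ℤ) • adjMat G + vecMulVec 1 1 := by
  ext u v
  by_cases huv : u = v
  · subst huv
    simp [adjMat]
  · by_cases hadj : G.Adj u v <;> simp [adjMat, huv, hadj]

lemma det_walkMat_compl {n : ℕ} (G : SimpleGraph (Fin n)) :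
    (walkMat Gᶜ).det = (∏ i : Fin n, (-1 : ℤ) ^ (i : ℕ)) * (walkMat G).det := by
  rw [walkMat_eq_krylov, walkMat_eq_krylov, det_krylov (adjMat_compl G)]

/-- a graph is controllable iff its complement is controllable. -/
theorem controllable_iff_compl_controllable {n : ℕ} (G : SimpleGraph (Fin n)) :
    (walkMat G).det ≠ 0 ↔ (walkMat Gᶜ).det ≠ 0 := by
  rw [det_walkMat_compl]
  simp [Finset.prod_ne_zero_iff]
end

section
/- Let H be a simple graph with complement H̄. Then the complement of the graph (H ∨ u) ∪ w is isomorphic to (H̄ ∪ u) ∨ w (via the identity map on vertices), and consequently det(A(complement of ((H ∨ u) ∪ w))) = − det(A(H̄)). -/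
open Matrix

/-!
Complementation exchanges the two one-vertex extensions: the complement of `G ∪ w` is `Ḡ ∨ w`
and the complement of `G ∨ w` is `Ḡ ∪ w`, which gives the graph identity. In the adjacency
matrix of `(Ḡ ∪ u) ∨ w` the row and the column of `u` are both the unit vector at `w`, so
Laplace expansion along that column and then along the row of `u` leaves `−det A(Ḡ)`.
-/

variable {n : ℕ} (G : SimpleGraph (Fin n))

section Adjacency

variable {G}

@[simp]
theorem unionVertex_not_adj_zero_left (v : Fin (n + 1)) : ¬(unionVertex G).Adj 0 v := by
  rintro ⟨i, j, hi, -, -⟩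
  exact Fin.succ_ne_zero i hi.symm

@[simp]
theorem unionVertex_not_adj_zero_right (v : Fin (n + 1)) : ¬(unionVertex G).Adj v 0 :=
  fun h => unionVertex_not_adj_zero_left v h.symm

@[simp]
theorem unionVertex_adj_succ_succ {i j : Fin n} :
    (unionVertex G).Adj i.succ j.succ ↔ G.Adj i j := by
  constructor
  · rintro ⟨a, b, ha, hb, h⟩
    rwa [Fin.succ_inj.mp ha, Fin.succ_inj.mp hb]
  · exact fun h => ⟨i, j, rfl, rfl, h⟩

@[simp]
theorem joinVertex_adj_zero_succ (i : Fin n) : (joinVertex G).Adj 0 i.succ :=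
  Or.inl ⟨rfl, Fin.succ_ne_zero i⟩

@[simp]
theorem joinVertex_adj_succ_zero (i : Fin n) : (joinVertex G).Adj i.succ 0 :=
  (joinVertex_adj_zero_succ i).symm

@[simp]
theorem joinVertex_adj_succ_succ {i j : Fin n} :
    (joinVertex G).Adj i.succ j.succ ↔ G.Adj i j := by
  constructor
  · rintro (⟨h, -⟩ | ⟨h, -⟩ | ⟨a, b, ha, hb, h⟩)
    · exact absurd h (Fin.succ_ne_zero i)
    · exact absurd h (Fin.succ_ne_zero j)
    · rwa [Fin.succ_inj.mp ha, Fin.succ_inj.mp hb]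
  · exact fun h => Or.inr (Or.inr ⟨i, j, rfl, rfl, h⟩)

end Adjacency

theorem compl_unionVertex : (unionVertex G)ᶜ = joinVertex Gᶜ := by
  ext u v
  cases u using Fin.cases <;> cases v using Fin.cases <;> simp [eq_comm (a := (0 : Fin (n + 1)))]

theorem compl_joinVertex : (joinVertex G)ᶜ = unionVertex Gᶜ := by
  rw [compl_eq_comm, compl_unionVertex, compl_compl]

theorem unionVertex_comap_succ : (unionVertex G).comap Fin.succ = G := by
  ext; simp

theorem joinVertex_comap_succ : (joinVertex G).comap Fin.succ = G := by
  ext; simp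

theorem adjMat_comap {V W : Type*} [Fintype V] [Fintype W] (f : V → W) (G : SimpleGraph W) :
    adjMat (G.comap f) = (adjMat G).submatrix f f :=
  rfl

theorem adjMat_transpose {V : Type*} [Fintype V] (G : SimpleGraph V) :
    (adjMat G)ᵀ = adjMat G := by
  ext u v
  simp only [adjMat, transpose_apply, of_apply]
  rw [G.adj_comm]

theorem Matrix.det_eq_neg_det_submatrix_succ_succ {R : Type*} [CommRing R]
    (M : Matrix (Fin (n + 2)) (Fin (n + 2)) R)
    (hrow : M 1 = Pi.single 0 1) (hcol : Mᵀ 1 = Pi.single 0 1) :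
    M.det = -(M.submatrix (Fin.succ ∘ Fin.succ) (Fin.succ ∘ Fin.succ)).det := by
  have hrow' (j : Fin (n + 2)) : M 1 j = (Pi.single 0 1 : Fin (n + 2) → R) j := by rw [hrow]
  have hcol' (i : Fin (n + 2)) : M i 1 = (Pi.single 0 1 : Fin (n + 2) → R) i := by
    rw [← transpose_apply M 1 i, hcol]
  set N := M.submatrix Fin.succ (Fin.succAbove 1)
  have hN : M.det = -N.det := by
    rw [det_succ_column M 1, Fintype.sum_eq_single 0 fun i hi => by simp [hcol', hi]]
    simp [hcol', N]
  have hN_row : N.det = (N.submatrix Fin.succ Fin.succ).det := by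
    rw [det_succ_row_zero, Fintype.sum_eq_single 0 fun j hj => by
      simp [N, hrow', Fin.succAbove_ne_zero one_ne_zero hj]]
    simp [N, hrow']
  rw [hN, hN_row, submatrix_submatrix]
  congr 3

theorem det_adjMat_joinVertex_unionVertex :
    (adjMat (joinVertex (unionVertex G))).det = -(adjMat G).det := by
  have hrow : adjMat (joinVertex (unionVertex G)) 1 = Pi.single 0 1 := by
    ext j
    rw [show (1 : Fin (n + 2)) = Fin.succ 0 from rfl]
    cases j using Fin.cases <;> simp [adjMat, -Fin.succ_zero_eq_one, -Fin.succ_zero_eq_one']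
  rw [det_eq_neg_det_submatrix_succ_succ _ hrow (by rwa [adjMat_transpose]),
    ← submatrix_submatrix, ← adjMat_comap, ← adjMat_comap, joinVertex_comap_succ,
    unionVertex_comap_succ]

/-- the complement of `(H ∨ u) ∪ w` is the graph `(H̄ ∪ u) ∨ w`
(the identity map on vertices is an isomorphism, i.e. the two graphs are equal),
and consequently its adjacency matrix has determinant `− det(A(H̄))`. -/
theorem compl_union_join_eq_and_det {n : ℕ} (H : SimpleGraph (Fin n)) :
    (unionVertex (joinVertex H))ᶜ = joinVertex (unionVertex Hᶜ) ∧
      (adjMat ((unionVertex (joinVertex H))ᶜ)).det = - (adjMat Hᶜ).det := by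
  have hcompl : (unionVertex (joinVertex H))ᶜ = joinVertex (unionVertex Hᶜ) := by
    rw [compl_unionVertex, compl_joinVertex]
  exact ⟨hcompl, by rw [hcompl, det_adjMat_joinVertex_unionVertex]⟩
end
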